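/- arXiv:quant-ph/0504194 — 2 statements merged into one kernel-verified Lean document; each statement's English description precedes it below -/
import Mathlib

section
/- Let B : {0,1,…,N−1} → {0,1} be a Boolean function for which there is exactly one index j_B with B(j_B) = 1. Then the function g_B is twice continuously differentiable on [0,1] and ∫₀¹ g_B(x)·sin²(πx) dx = Int(h)·j_B/(16N⁴). -/
/-- The supremum norm of a real function over the interval `[0,1]`. -/
noncomputable def supNorm (f : ℝ → ℝ) : ℝ := ⨆ x : Set.Icc (0:ℝ) 1, |f x|

/-- The class `F_M` of twice continuously differentiable functions `f : [0,1] → ℝ`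
with `‖f‖∞ ≤ M`, `‖f′‖∞ ≤ M` and `‖f″‖∞ ≤ M`. -/
def memF (M : ℝ) (f : ℝ → ℝ) : Prop :=
  ContDiffOn ℝ 2 f (Set.Icc 0 1) ∧
  supNorm f ≤ M ∧
  supNorm (derivWithin f (Set.Icc 0 1)) ≤ M ∧
  supNorm (derivWithin (derivWithin f (Set.Icc 0 1)) (Set.Icc 0 1)) ≤ M

/-- The extension of `h` by zero outside `[0,1]`: `H(x) = h(x)` on `[0,1]`, else `0`. -/
noncomputable def Hext (h : ℝ → ℝ) : ℝ → ℝ :=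
  fun x => if x ∈ Set.Icc (0:ℝ) 1 then h x else 0

/-- The subdivision points `x_j = 1/4 + j/(2N)` of the interval `[1/4, 3/4]`. -/
noncomputable def xnode (N j : ℕ) : ℝ := 1/4 + (j : ℝ) / (2 * N)

/-- The bump `h_j(x) = H(2N(x − x_j))/(4N²)`. -/
noncomputable def hjfun (h : ℝ → ℝ) (N j : ℕ) : ℝ → ℝ :=
  fun x => Hext h (2 * N * (x - xnode N j)) / (4 * N ^ 2)

/-- The function `g_B` associated with a Boolean function `B` on `{0,…,N−1}`:
`g_B(x) = j·h_j(x)·B(j)/(2N sin²(πx))` on `[x_j, x_{j+1}]` and `g_B(x) = 0` on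
`[0,1/4] ∪ [3/4,1]`, written as a sum over the disjointly supported bumps. -/
noncomputable def gB (h : ℝ → ℝ) (N : ℕ) (B : ℕ → ℕ) : ℝ → ℝ :=
  fun x => ∑ j ∈ Finset.range N,
    (j : ℝ) * hjfun h N j x * (B j : ℝ) / (2 * N * (Real.sin (Real.pi * x)) ^ 2)

section AuxGlue
open Set

lemma Hext_of_mem {h : ℝ → ℝ} {x : ℝ} (hx : x ∈ Icc (0:ℝ) 1) : Hext h x = h x := if_pos hx

lemma Hext_zero_left {h : ℝ → ℝ} (h0 : h 0 = 0) {x : ℝ} (hx : x ≤ 0) : Hext h x = 0 := by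
  rcases eq_or_lt_of_le hx with rfl | hx'
  · simpa [Hext] using h0
  · simp [Hext, not_le.2 hx', Set.mem_Icc]

lemma Hext_zero_right {h : ℝ → ℝ} (h1 : h 1 = 0) {x : ℝ} (hx : 1 ≤ x) : Hext h x = 0 := by
  rcases eq_or_lt_of_le hx with rfl | hx'
  · simpa [Hext] using h1
  · simp [Hext, Set.mem_Icc, not_le.2 hx']

lemma hasDerivAt_Hext (f f' : ℝ → ℝ)
    (hf : ∀ x ∈ Icc (0:ℝ) 1, HasDerivWithinAt f (f' x) (Icc 0 1) x)
    (f0 : f 0 = 0) (f1 : f 1 = 0) (f'0 : f' 0 = 0) (f'1 : f' 1 = 0) :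
    ∀ x, HasDerivAt (Hext f) (Hext f' x) x := by
  intro x
  rcases lt_trichotomy x 0 with hx | rfl | hx
  · have he : Hext f =ᶠ[nhds x] (fun _ => 0) := by
      filter_upwards [Iio_mem_nhds hx] with y hy
      exact Hext_zero_left f0 (le_of_lt hy)
    have : HasDerivAt (Hext f) 0 x := (hasDerivAt_const x (0:ℝ)).congr_of_eventuallyEq he
    simpa [Hext_zero_left f'0 (le_of_lt hx)] using this
  · -- x = 0
    have hleft : HasDerivWithinAt (Hext f) 0 (Iic 0) 0 := by
      refine (hasDerivWithinAt_const 0 _ (0:ℝ)).congr ?_ ?_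
      · intro y hy; exact Hext_zero_left f0 hy
      · exact Hext_zero_left f0 le_rfl
    have hright : HasDerivWithinAt (Hext f) 0 (Ici 0) 0 := by
      have h1' : HasDerivWithinAt f 0 (Icc 0 1) 0 := by
        simpa [f'0] using hf 0 (by simp)
      have h2 : HasDerivWithinAt f 0 (Ici 0) 0 :=
        h1'.mono_of_mem_nhdsWithin (by
          rw [← Ici_inter_Iic]
          exact inter_mem_nhdsWithin _ (Iic_mem_nhds one_pos))
      refine h2.congr_of_eventuallyEq ?_ (Hext_of_mem (by simp))
      filter_upwards [inter_mem_nhdsWithin (Ici 0) (Iio_mem_nhds one_pos)] with y hy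
      exact Hext_of_mem ⟨hy.1, le_of_lt hy.2⟩
    have := (hleft.union hright)
    rw [Iic_union_Ici] at this
    have h3 := this.hasDerivAt (by simp)
    simpa [Hext_zero_left f'0 le_rfl] using h3
  rcases lt_trichotomy x 1 with hx1 | rfl | hx1
  · -- x ∈ (0,1)
    have hmem : Icc (0:ℝ) 1 ∈ nhds x := Icc_mem_nhds hx hx1
    have : HasDerivAt f (f' x) x := (hf x ⟨le_of_lt hx, le_of_lt hx1⟩).hasDerivAt hmem
    have he : Hext f =ᶠ[nhds x] f := by
      filter_upwards [hmem] with y hy; exact Hext_of_mem hy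
    simpa [Hext_of_mem (⟨le_of_lt hx, le_of_lt hx1⟩ : x ∈ Icc (0:ℝ) 1)] using
      this.congr_of_eventuallyEq he
  · -- x = 1
    have hright : HasDerivWithinAt (Hext f) 0 (Ici 1) 1 := by
      refine (hasDerivWithinAt_const 1 _ (0:ℝ)).congr ?_ ?_
      · intro y hy; exact Hext_zero_right f1 hy
      · exact Hext_zero_right f1 le_rfl
    have hleft : HasDerivWithinAt (Hext f) 0 (Iic 1) 1 := by
      have h1' : HasDerivWithinAt f 0 (Icc 0 1) 1 := by
        simpa [f'1] using hf 1 (by simp)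
      have hIcc : Icc (0:ℝ) 1 ∈ nhdsWithin 1 (Iic 1) := by
        rw [← Ici_inter_Iic]
        exact Filter.inter_mem
          (mem_nhdsWithin_of_mem_nhds (Ici_mem_nhds (by norm_num))) self_mem_nhdsWithin
      have h2 : HasDerivWithinAt f 0 (Iic 1) 1 := h1'.mono_of_mem_nhdsWithin hIcc
      refine h2.congr_of_eventuallyEq ?_ (Hext_of_mem (by simp))
      filter_upwards [hIcc] with y hy
      exact Hext_of_mem hy
    have := (hleft.union hright)
    rw [Iic_union_Ici] at this
    have h3 := this.hasDerivAt (by simp)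
    simpa [Hext_zero_right f'1 le_rfl] using h3
  · have he : Hext f =ᶠ[nhds x] (fun _ => 0) := by
      filter_upwards [Ioi_mem_nhds hx1] with y hy
      exact Hext_zero_right f1 (le_of_lt hy)
    have : HasDerivAt (Hext f) 0 x := (hasDerivAt_const x (0:ℝ)).congr_of_eventuallyEq he
    simpa [Hext_zero_right f'1 (le_of_lt hx1)] using this

lemma continuous_Hext (f : ℝ → ℝ) (hf : ContinuousOn f (Icc 0 1))
    (f0 : f 0 = 0) (f1 : f 1 = 0) : Continuous (Hext f) := by
  rw [continuous_iff_continuousAt]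
  intro x
  rcases lt_trichotomy x 0 with hx | rfl | hx
  · have he : Hext f =ᶠ[nhds x] (fun _ => 0) := by
      filter_upwards [Iio_mem_nhds hx] with y hy
      exact Hext_zero_left f0 (le_of_lt hy)
    exact ContinuousAt.congr (continuousAt_const) he.symm
  · have hleft : ContinuousWithinAt (Hext f) (Iic 0) 0 := by
      refine (continuousWithinAt_const (b := (0:ℝ))).congr ?_ (Hext_zero_left f0 le_rfl)
      intro y hy; exact Hext_zero_left f0 hy
    have hright : ContinuousWithinAt (Hext f) (Ici 0) 0 := by
      have hIcc : Icc (0:ℝ) 1 ∈ nhdsWithin 0 (Ici 0) := by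
        rw [← Ici_inter_Iic]
        exact inter_mem_nhdsWithin _ (Iic_mem_nhds one_pos)
      have h2 : ContinuousWithinAt f (Ici 0) 0 :=
        (hf 0 (by simp)).mono_of_mem_nhdsWithin hIcc
      refine h2.congr_of_eventuallyEq ?_ (Hext_of_mem (by simp))
      filter_upwards [hIcc] with y hy
      exact Hext_of_mem hy
    have := hleft.union hright
    rwa [Iic_union_Ici, continuousWithinAt_univ] at this
  rcases lt_trichotomy x 1 with hx1 | rfl | hx1
  · have hmem : Icc (0:ℝ) 1 ∈ nhds x := Icc_mem_nhds hx hx1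
    have : ContinuousAt f x := (hf.continuousAt hmem)
    refine this.congr ?_
    filter_upwards [hmem] with y hy
    exact (Hext_of_mem hy).symm
  · have hright : ContinuousWithinAt (Hext f) (Ici 1) 1 := by
      refine (continuousWithinAt_const (b := (0:ℝ))).congr ?_ (Hext_zero_right f1 le_rfl)
      intro y hy; exact Hext_zero_right f1 hy
    have hleft : ContinuousWithinAt (Hext f) (Iic 1) 1 := by
      have hIcc : Icc (0:ℝ) 1 ∈ nhdsWithin 1 (Iic 1) := by
        rw [← Ici_inter_Iic]
        exact Filter.inter_mem
          (mem_nhdsWithin_of_mem_nhds (Ici_mem_nhds (by norm_num))) self_mem_nhdsWithin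
      have h2 : ContinuousWithinAt f (Iic 1) 1 :=
        (hf 1 (by simp)).mono_of_mem_nhdsWithin hIcc
      refine h2.congr_of_eventuallyEq ?_ (Hext_of_mem (by simp))
      filter_upwards [hIcc] with y hy
      exact Hext_of_mem hy
    have := hleft.union hright
    rwa [Iic_union_Ici, continuousWithinAt_univ] at this
  · have he : Hext f =ᶠ[nhds x] (fun _ => 0) := by
      filter_upwards [Ioi_mem_nhds hx1] with y hy
      exact Hext_zero_right f1 (le_of_lt hy)
    exact ContinuousAt.congr (continuousAt_const) he.symm

lemma contDiff_Hext (h : ℝ → ℝ) (hh : ContDiffOn ℝ 2 h (Set.Icc 0 1))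
    (h0 : h 0 = 0) (h1 : h 1 = 0)
    (hd0 : derivWithin h (Set.Icc 0 1) 0 = 0)
    (hd1 : derivWithin h (Set.Icc 0 1) 1 = 0)
    (hdd0 : derivWithin (derivWithin h (Set.Icc 0 1)) (Set.Icc 0 1) 0 = 0)
    (hdd1 : derivWithin (derivWithin h (Set.Icc 0 1)) (Set.Icc 0 1) 1 = 0) :
    ContDiff ℝ 2 (Hext h) := by
  set h₁ := derivWithin h (Icc (0:ℝ) 1) with hh₁
  set h₂ := derivWithin h₁ (Icc (0:ℝ) 1) with hh₂
  have hud : UniqueDiffOn ℝ (Icc (0:ℝ) 1) := uniqueDiffOn_Icc one_pos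
  have hC1 : ContDiffOn ℝ 1 h₁ (Icc 0 1) := hh.derivWithin (m := 1) hud (by norm_num)
  have D1 : ∀ x ∈ Icc (0:ℝ) 1, HasDerivWithinAt h (h₁ x) (Icc 0 1) x := fun x hx =>
    ((hh.differentiableOn (by norm_num)) x hx).hasDerivWithinAt
  have D2 : ∀ x ∈ Icc (0:ℝ) 1, HasDerivWithinAt h₁ (h₂ x) (Icc 0 1) x := fun x hx =>
    ((hC1.differentiableOn (by norm_num)) x hx).hasDerivWithinAt
  have C2 : ContinuousOn h₂ (Icc 0 1) := (hC1.derivWithin (m := 0) hud (by norm_num)).continuousOn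
  have HD1 : ∀ x, HasDerivAt (Hext h) (Hext h₁ x) x :=
    hasDerivAt_Hext h h₁ D1 h0 h1 hd0 hd1
  have HD2 : ∀ x, HasDerivAt (Hext h₁) (Hext h₂ x) x :=
    hasDerivAt_Hext h₁ h₂ D2 hd0 hd1 hdd0 hdd1
  have Cc : Continuous (Hext h₂) := continuous_Hext h₂ C2 hdd0 hdd1
  have e1 : deriv (Hext h) = Hext h₁ := funext fun x => (HD1 x).deriv
  have e2 : deriv (Hext h₁) = Hext h₂ := funext fun x => (HD2 x).deriv
  rw [show (2 : WithTop ℕ∞) = 1 + 1 from rfl, contDiff_succ_iff_deriv]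
  refine ⟨fun x => (HD1 x).differentiableAt, by simp, ?_⟩
  rw [e1, contDiff_one_iff_deriv, e2]
  exact ⟨fun x => (HD2 x).differentiableAt, Cc⟩




lemma contDiff_hjfun {h : ℝ → ℝ} (HC : ContDiff ℝ 2 (Hext h)) (N j : ℕ) :
    ContDiff ℝ 2 (hjfun h N j) :=
  (HC.comp ((contDiff_const.mul (contDiff_id.sub contDiff_const)))).div_const _

lemma hjfun_zero_left {h : ℝ → ℝ} (h0 : h 0 = 0) (N j : ℕ) {x : ℝ} (hx : x ≤ 1/4) :
    hjfun h N j x = 0 := by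
  have hxn : (1/4 : ℝ) ≤ xnode N j := by
    have : (0:ℝ) ≤ (j : ℝ) / (2 * N) := by positivity
    simp only [xnode]; linarith
  have harg : 2 * (N:ℝ) * (x - xnode N j) ≤ 0 :=
    mul_nonpos_of_nonneg_of_nonpos (by positivity) (by linarith)
  simp [hjfun, Hext_zero_left h0 harg]

lemma hjfun_zero_right {h : ℝ → ℝ} (h1 : h 1 = 0) {N j : ℕ} (hN : 0 < N) (hj : j < N)
    {x : ℝ} (hx : 3/4 ≤ x) : hjfun h N j x = 0 := by
  have hNR : (0:ℝ) < N := by exact_mod_cast hN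
  have hjN : (j : ℝ) + 1 ≤ N := by exact_mod_cast hj
  have harg : (1:ℝ) ≤ 2 * (N:ℝ) * (x - xnode N j) := by
    have he : 2 * (N:ℝ) * (x - xnode N j) = 2 * N * x - N/2 - j := by
      simp only [xnode]; field_simp; ring
    nlinarith [mul_nonneg (le_of_lt hNR) (by linarith : (0:ℝ) ≤ x - 3/4)]
  simp [hjfun, Hext_zero_right h1 harg]


end AuxGlue

/-- If `B : {0,…,N−1} → {0,1}` takes the value `1` at exactly one index `j_B`, then
`g_B` is twice continuously differentiable on `[0,1]` and
`∫₀¹ g_B(x)·sin²(πx) dx = Int(h)·j_B/(16N⁴)`. -/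
theorem gB_smooth_and_integral
    (h : ℝ → ℝ) (hh : ContDiffOn ℝ 2 h (Set.Icc 0 1))
    (h0 : h 0 = 0) (h1 : h 1 = 0)
    (hd0 : derivWithin h (Set.Icc 0 1) 0 = 0)
    (hd1 : derivWithin h (Set.Icc 0 1) 1 = 0)
    (hdd0 : derivWithin (derivWithin h (Set.Icc 0 1)) (Set.Icc 0 1) 0 = 0)
    (hdd1 : derivWithin (derivWithin h (Set.Icc 0 1)) (Set.Icc 0 1) 1 = 0)
    (hInt : 0 < ∫ x in (0:ℝ)..1, h x)
    (N : ℕ) (hN : 0 < N) (B : ℕ → ℕ) (hB : ∀ j < N, B j ≤ 1)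
    (jB : ℕ) (hjB : jB < N) (hBjB : B jB = 1)
    (huniq : ∀ j < N, B j = 1 → j = jB) :
    ContDiffOn ℝ 2 (gB h N B) (Set.Icc 0 1) ∧
    (∫ x in (0:ℝ)..1, gB h N B x * (Real.sin (Real.pi * x)) ^ 2) =
      (∫ x in (0:ℝ)..1, h x) * (jB : ℝ) / (16 * N ^ 4) := by

  have hNR : (0:ℝ) < N := by exact_mod_cast hN
  have hNne : (N:ℝ) ≠ 0 := ne_of_gt hNR
  have HC : ContDiff ℝ 2 (Hext h) := contDiff_Hext h hh h0 h1 hd0 hd1 hdd0 hdd1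
  have Hj : ∀ j : ℕ, ContDiff ℝ 2 (hjfun h N j) := fun j => contDiff_hjfun HC N j
  constructor
  · -- smoothness
    intro x hx
    rcases eq_or_lt_of_le hx.1 with hx0 | hx0
    · -- x = 0
      subst hx0
      have hzero : ∀ y : ℝ, y < 1/4 → gB h N B y = 0 := by
        intro y hy
        simp only [gB]
        refine Finset.sum_eq_zero fun j _ => ?_
        rw [hjfun_zero_left h0 N j (le_of_lt hy)]
        simp
      refine (contDiffWithinAt_const (c := (0:ℝ))).congr_of_eventuallyEq ?_ ?_
      · filter_upwards [mem_nhdsWithin_of_mem_nhds (Iio_mem_nhds (by norm_num : (0:ℝ) < 1/4))]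
          with y hy
        exact hzero y hy
      · exact hzero 0 (by norm_num)
    rcases eq_or_lt_of_le hx.2 with hx1 | hx1
    · -- x = 1
      have hzero : ∀ y : ℝ, 3/4 < y → gB h N B y = 0 := by
        intro y hy
        simp only [gB]
        refine Finset.sum_eq_zero fun j hjm => ?_
        rw [hjfun_zero_right h1 hN (Finset.mem_range.1 hjm) (le_of_lt hy)]
        simp
      subst hx1
      refine (contDiffWithinAt_const (c := (0:ℝ))).congr_of_eventuallyEq ?_ ?_
      · filter_upwards [mem_nhdsWithin_of_mem_nhds (Ioi_mem_nhds (by norm_num : (3/4:ℝ) < 1))]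
          with y hy
        exact hzero y hy
      · exact hzero 1 (by norm_num)
    · -- 0 < x < 1
      have hsin : Real.sin (Real.pi * x) ≠ 0 := by
        have := Real.sin_pos_of_pos_of_lt_pi (x := Real.pi * x)
          (by positivity) (by nlinarith [Real.pi_pos])
        exact ne_of_gt this
      refine ContDiffAt.contDiffWithinAt ?_
      have hden : ContDiff ℝ 2 fun y : ℝ => 2 * (N:ℝ) * Real.sin (Real.pi * y) ^ 2 :=
        contDiff_const.mul ((Real.contDiff_sin.comp (contDiff_const.mul contDiff_id)).pow 2)
      refine ContDiffAt.sum fun j _ => ?_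
      exact ContDiffAt.div
        (((contDiff_const.mul (Hj j)).mul contDiff_const).contDiffAt)
        hden.contDiffAt (by positivity)
  · -- integral
    set F : ℝ → ℝ := fun x => ∑ j ∈ Finset.range N,
      (j : ℝ) * hjfun h N j x * (B j : ℝ) / (2 * N) with hF
    have step1 : (∫ x in (0:ℝ)..1, gB h N B x * (Real.sin (Real.pi * x)) ^ 2)
        = ∫ x in (0:ℝ)..1, F x := by
      refine intervalIntegral.integral_congr ?_
      intro x hx
      rw [Set.uIcc_of_le (by norm_num : (0:ℝ) ≤ 1)] at hx
      by_cases hs : Real.sin (Real.pi * x) = 0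
      · have hx01 : x = 0 ∨ x = 1 := by
          by_contra hcon
          push_neg at hcon
          have hx0 : 0 < x := lt_of_le_of_ne hx.1 (Ne.symm hcon.1)
          have hx1 : x < 1 := lt_of_le_of_ne hx.2 hcon.2
          exact absurd hs (ne_of_gt (Real.sin_pos_of_pos_of_lt_pi
            (by positivity) (by nlinarith [Real.pi_pos])))
        have hz : ∀ j ∈ Finset.range N, hjfun h N j x = 0 := by
          intro j hjm
          rcases hx01 with rfl | rfl
          · exact hjfun_zero_left h0 N j (by norm_num)
          · exact hjfun_zero_right h1 hN (Finset.mem_range.1 hjm) (by norm_num)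
        have hg : gB h N B x = 0 := by
          simp only [gB]
          exact Finset.sum_eq_zero fun j hjm => by rw [hz j hjm]; simp
        have hFx : F x = 0 :=
          Finset.sum_eq_zero fun j hjm => by rw [hz j hjm]; simp
        simp only [hg, hFx, zero_mul]
      · simp only [gB, hF, Finset.sum_mul]
        refine Finset.sum_congr rfl fun j _ => ?_
        field_simp
    have cont_term : ∀ j : ℕ, Continuous fun x =>
        (j : ℝ) * hjfun h N j x * (B j : ℝ) / (2 * (N:ℝ)) :=
      fun j => ((continuous_const.mul (Hj j).continuous).mul continuous_const).div_const _
    have step2 : (∫ x in (0:ℝ)..1, F x)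
        = ∑ j ∈ Finset.range N, ∫ x in (0:ℝ)..1,
            (j : ℝ) * hjfun h N j x * (B j : ℝ) / (2 * N) := by
      rw [hF]
      exact intervalIntegral.integral_finset_sum
        fun j _ => (cont_term j).intervalIntegrable _ _
    have step3 : (∑ j ∈ Finset.range N, ∫ x in (0:ℝ)..1,
          (j : ℝ) * hjfun h N j x * (B j : ℝ) / (2 * N))
        = ∫ x in (0:ℝ)..1, (jB : ℝ) * hjfun h N jB x * (B jB : ℝ) / (2 * N) := by
      refine Finset.sum_eq_single_of_mem jB (Finset.mem_range.2 hjB) fun j hjm hne => ?_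
      have hBj : B j = 0 := by
        rcases Nat.le_one_iff_eq_zero_or_eq_one.1 (hB j (Finset.mem_range.1 hjm)) with hzz | ho
        · exact hzz
        · exact absurd (huniq j (Finset.mem_range.1 hjm) ho) hne
      simp [hBj]
    have step4 : (∫ x in (0:ℝ)..1, (jB : ℝ) * hjfun h N jB x * (B jB : ℝ) / (2 * N))
        = ((jB : ℝ) / (2 * N)) * ∫ x in (0:ℝ)..1, hjfun h N jB x := by
      rw [← intervalIntegral.integral_const_mul]
      refine intervalIntegral.integral_congr fun x _ => ?_
      rw [hBjB]
      push_cast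
      ring
    -- compute the integral of hjfun
    have HIcont : Continuous (Hext h) := HC.continuous
    have HI : ∀ a b : ℝ, IntervalIntegrable (Hext h) MeasureTheory.volume a b :=
      fun a b => HIcont.intervalIntegrable a b
    set d : ℝ := 2 * N * xnode N jB with hd
    have harg : ∀ x : ℝ, 2 * (N:ℝ) * (x - xnode N jB) = 2 * N * x - d := by
      intro x; rw [hd]; ring
    have hdval : d = (N:ℝ)/2 + jB := by
      rw [hd]; simp only [xnode]; field_simp; ring
    have hu : 2 * (N:ℝ) * 0 - d ≤ 0 := by
      have : (0:ℝ) ≤ (jB:ℝ) := Nat.cast_nonneg _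
      rw [hdval]; linarith
    have hv : (1:ℝ) ≤ 2 * (N:ℝ) * 1 - d := by
      have hjN : (jB : ℝ) + 1 ≤ N := by exact_mod_cast hjB
      rw [hdval]; linarith
    have step5 : (∫ x in (0:ℝ)..1, hjfun h N jB x)
        = ((2 * (N:ℝ))⁻¹ * ∫ x in (0:ℝ)..1, h x) / (4 * (N:ℝ)^2) := by
      simp only [hjfun]
      rw [intervalIntegral.integral_div]
      congr 1
      have : ∀ x ∈ Set.uIcc (0:ℝ) 1, Hext h (2 * (N:ℝ) * (x - xnode N jB))
          = Hext h (2 * N * x - d) := fun x _ => by rw [harg x]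
      rw [intervalIntegral.integral_congr this,
        intervalIntegral.integral_comp_mul_sub (Hext h) (by positivity) d]
      have hsplit : (∫ x in (2 * (N:ℝ) * 0 - d)..(2 * (N:ℝ) * 1 - d), Hext h x)
          = ∫ x in (0:ℝ)..1, h x := by
        rw [← intervalIntegral.integral_add_adjacent_intervals (HI _ 0) (HI 0 _),
          ← intervalIntegral.integral_add_adjacent_intervals (HI 0 1) (HI 1 _)]
        have e1 : (∫ x in (2 * (N:ℝ) * 0 - d)..(0:ℝ), Hext h x) = 0 := by
          rw [intervalIntegral.integral_congr (g := fun _ => (0:ℝ))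
            (fun y hy => by
              rw [Set.uIcc_of_le hu] at hy
              exact Hext_zero_left h0 hy.2)]
          simp
        have e2 : (∫ x in (1:ℝ)..(2 * (N:ℝ) * 1 - d), Hext h x) = 0 := by
          rw [intervalIntegral.integral_congr (g := fun _ => (0:ℝ))
            (fun y hy => by
              rw [Set.uIcc_of_le hv] at hy
              exact Hext_zero_right h1 hy.1)]
          simp
        have e3 : (∫ x in (0:ℝ)..1, Hext h x) = ∫ x in (0:ℝ)..1, h x :=
          intervalIntegral.integral_congr fun y hy => by
            rw [Set.uIcc_of_le (by norm_num : (0:ℝ) ≤ 1)] at hy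
            exact Hext_of_mem hy
        rw [e1, e2, e3]; ring
      rw [hsplit, smul_eq_mul]
    rw [step1, step2, step3, step4, step5]
    field_simp
    ring
end

section
/- Let B : {0,1,…,N−1} → {0,1} be a Boolean function for which there is exactly one index j_B with B(j_B) = 1, and set I(g_B) = ∫₀¹ g_B(x)·sin²(πx) dx. If y is a real number with |I(g_B) − y| ≤ Int(h)/(48N⁴), then j_B = ⌊(16N⁴/Int(h))·y + 1/2⌋. -/
lemma Hext_cont (h : ℝ → ℝ) (hh : ContinuousOn h (Set.Icc 0 1))
    (h0 : h 0 = 0) (h1 : h 1 = 0) : Continuous (Hext h) := by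
  have heq : Hext h = fun x => h (min 1 (max 0 x)) := by
    funext x
    unfold Hext
    rcases le_or_gt x 0 with hx | hx
    · rcases eq_or_lt_of_le hx with rfl | hx'
      · simp [h0]
      · rw [if_neg (by simp only [Set.mem_Icc]; intro h'; linarith),
          max_eq_left hx'.le, min_eq_right zero_le_one, h0]
    · rcases le_or_gt x 1 with hx1 | hx1
      · rw [if_pos ⟨hx.le, hx1⟩, max_eq_right hx.le, min_eq_right hx1]
      · rw [if_neg (by simp only [Set.mem_Icc]; rintro ⟨_, h'⟩; linarith),
          max_eq_right hx.le, min_eq_left hx1.le, h1]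
  rw [heq]
  exact hh.comp_continuous (continuous_const.min (continuous_const.max continuous_id))
    (fun x => ⟨le_min zero_le_one (le_max_left 0 x), min_le_left _ _⟩)

lemma Hext_integral (h : ℝ → ℝ) (hh : ContinuousOn h (Set.Icc 0 1))
    (h0 : h 0 = 0) (h1 : h 1 = 0) (a b : ℝ) (ha : a ≤ 0) (hb : 1 ≤ b) :
    ∫ x in a..b, Hext h x = ∫ x in (0:ℝ)..1, h x := by
  have hcont := Hext_cont h hh h0 h1
  have i1 : IntervalIntegrable (Hext h) MeasureTheory.volume a 0 := hcont.intervalIntegrable _ _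
  have i2 : IntervalIntegrable (Hext h) MeasureTheory.volume 0 1 := hcont.intervalIntegrable _ _
  have i3 : IntervalIntegrable (Hext h) MeasureTheory.volume 1 b := hcont.intervalIntegrable _ _
  have e1 : (∫ x in a..(0:ℝ), Hext h x) + ∫ x in (0:ℝ)..b, Hext h x = ∫ x in a..b, Hext h x :=
    intervalIntegral.integral_add_adjacent_intervals i1 (hcont.intervalIntegrable _ _)
  have e2 : (∫ x in (0:ℝ)..1, Hext h x) + ∫ x in (1:ℝ)..b, Hext h x = ∫ x in (0:ℝ)..b, Hext h x :=
    intervalIntegral.integral_add_adjacent_intervals i2 i3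
  have z1 : (∫ x in a..(0:ℝ), Hext h x) = 0 := by
    have : ∫ x in a..(0:ℝ), Hext h x = ∫ x in a..(0:ℝ), (0:ℝ) := by
      apply intervalIntegral.integral_congr
      intro x hx
      rw [Set.uIcc_of_le ha] at hx
      unfold Hext
      split_ifs with hmem
      · have : x = 0 := le_antisymm hx.2 hmem.1
        rw [this, h0]
      · rfl
    simp [this]
  have z2 : (∫ x in (1:ℝ)..b, Hext h x) = 0 := by
    have : ∫ x in (1:ℝ)..b, Hext h x = ∫ x in (1:ℝ)..b, (0:ℝ) := by
      apply intervalIntegral.integral_congr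
      intro x hx
      rw [Set.uIcc_of_le hb] at hx
      unfold Hext
      split_ifs with hmem
      · have : x = 1 := le_antisymm hmem.2 hx.1
        rw [this, h1]
      · rfl
    simp [this]
  have mid : (∫ x in (0:ℝ)..1, Hext h x) = ∫ x in (0:ℝ)..1, h x := by
    apply intervalIntegral.integral_congr
    intro x hx
    rw [Set.uIcc_of_le zero_le_one] at hx
    exact if_pos hx
  linarith

/-- If `B : {0,…,N−1} → {0,1}` takes the value `1` at exactly one index `j_B`, and
`y` is a real number with `|I(g_B) − y| ≤ Int(h)/(48N⁴)` where
`I(g_B) = ∫₀¹ g_B(x)·sin²(πx) dx`, then `j_B = ⌊(16N⁴/Int(h))·y + 1/2⌋`. -/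
theorem gB_recovery
    (h : ℝ → ℝ) (hh : ContDiffOn ℝ 2 h (Set.Icc 0 1))
    (h0 : h 0 = 0) (h1 : h 1 = 0)
    (hd0 : derivWithin h (Set.Icc 0 1) 0 = 0)
    (hd1 : derivWithin h (Set.Icc 0 1) 1 = 0)
    (hdd0 : derivWithin (derivWithin h (Set.Icc 0 1)) (Set.Icc 0 1) 0 = 0)
    (hdd1 : derivWithin (derivWithin h (Set.Icc 0 1)) (Set.Icc 0 1) 1 = 0)
    (hInt : 0 < ∫ x in (0:ℝ)..1, h x)
    (N : ℕ) (hN : 0 < N) (B : ℕ → ℕ) (hB : ∀ j < N, B j ≤ 1)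
    (jB : ℕ) (hjB : jB < N) (hBjB : B jB = 1)
    (huniq : ∀ j < N, B j = 1 → j = jB)
    (y : ℝ)
    (hy : |(∫ x in (0:ℝ)..1, gB h N B x * (Real.sin (Real.pi * x)) ^ 2) - y| ≤
      (∫ x in (0:ℝ)..1, h x) / (48 * N ^ 4)) :
    (jB : ℤ) = ⌊(16 * (N : ℝ) ^ 4 / ∫ x in (0:ℝ)..1, h x) * y + 1/2⌋ := by
  set c := ∫ x in (0:ℝ)..1, h x with hc
  have hNpos : (0:ℝ) < N := by exact_mod_cast hN
  have hN' : (N:ℝ) ≠ 0 := ne_of_gt hNpos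
  have hjBle : (jB:ℝ) ≤ (N:ℝ) - 1 := by
    have : (jB:ℝ) + 1 ≤ N := by exact_mod_cast hjB
    linarith
  -- endpoint vanishing
  have hjb0 : hjfun h N jB 0 = 0 := by
    unfold hjfun Hext
    rw [if_neg, zero_div]
    have harg : 2*(N:ℝ)*(0 - xnode N jB) = -((N:ℝ)/2) - jB := by
      unfold xnode; field_simp; ring
    rw [harg]
    simp only [Set.mem_Icc]
    rintro ⟨h', _⟩
    have : (0:ℝ) ≤ jB := Nat.cast_nonneg jB
    linarith
  have hjb1 : hjfun h N jB 1 = 0 := by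
    unfold hjfun Hext
    rw [if_neg, zero_div]
    have harg : 2*(N:ℝ)*(1 - xnode N jB) = 3*(N:ℝ)/2 - jB := by
      unfold xnode; field_simp; ring
    rw [harg]
    simp only [Set.mem_Icc]
    rintro ⟨_, h'⟩
    linarith
  -- pointwise identity on [0,1]
  have hptwise : ∀ x ∈ Set.uIcc (0:ℝ) 1,
      gB h N B x * (Real.sin (Real.pi * x)) ^ 2
        = (jB:ℝ) * hjfun h N jB x / (2*N) := by
    intro x hx
    rw [Set.uIcc_of_le zero_le_one] at hx
    have hsum : gB h N B x
        = (jB:ℝ) * hjfun h N jB x * (B jB : ℝ)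
            / (2*N*(Real.sin (Real.pi * x))^2) := by
      unfold gB
      apply Finset.sum_eq_single_of_mem jB (Finset.mem_range.mpr hjB)
      intro j hj hne
      have hjlt := Finset.mem_range.mp hj
      have : B j = 0 := by
        have h1 := hB j hjlt
        have h2 := huniq j hjlt
        by_contra hcon
        have : B j = 1 := by omega
        exact hne (h2 this)
      simp [this]
    rw [hsum, hBjB, Nat.cast_one, mul_one]
    rcases eq_or_lt_of_le hx.1 with h0x | h0x
    · rw [← h0x]
      simp [hjb0]
    · rcases eq_or_lt_of_le hx.2 with h1x | h1x
      · rw [h1x]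
        simp [hjb1]
      · have hs : Real.sin (Real.pi * x) ≠ 0 := by
          refine ne_of_gt (Real.sin_pos_of_pos_of_lt_pi (by positivity) ?_)
          nlinarith [Real.pi_pos]
        field_simp
  -- compute the integral
  have hIval : (∫ x in (0:ℝ)..1, gB h N B x * (Real.sin (Real.pi * x)) ^ 2)
      = (jB:ℝ) * c / (16 * N^4) := by
    rw [intervalIntegral.integral_congr hptwise]
    have hrw : ∀ x : ℝ, (jB:ℝ) * hjfun h N jB x / (2*N)
        = ((jB:ℝ)/(2*N)) * ((1/(4*(N:ℝ)^2)) * Hext h (2*(N:ℝ)*x - 2*(N:ℝ)*xnode N jB)) := by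
      intro x
      unfold hjfun
      rw [mul_sub]
      ring
    simp only [hrw]
    rw [intervalIntegral.integral_const_mul, intervalIntegral.integral_const_mul,
      intervalIntegral.integral_comp_mul_sub (Hext h) (by positivity : 2*(N:ℝ) ≠ 0)
        (2*(N:ℝ)*xnode N jB)]
    have hd : 2*(N:ℝ)*xnode N jB = (N:ℝ)/2 + jB := by
      unfold xnode; field_simp; ring
    rw [Hext_integral h (hh.continuousOn) h0 h1 _ _ (by rw [hd]; nlinarith [(Nat.cast_nonneg jB : (0:ℝ) ≤ (jB:ℝ))])
      (by rw [hd]; nlinarith)]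
    rw [smul_eq_mul, ← hc]
    have hc0 : c ≠ 0 := ne_of_gt hInt
    field_simp
    ring
  -- final arithmetic
  rw [hIval] at hy
  set t := (16 * (N : ℝ) ^ 4 / c) * y with ht
  have hN4 : (0:ℝ) < (N:ℝ)^4 := by positivity
  have hkey : |(jB:ℝ) - t| ≤ 1/3 := by
    have heq : (jB:ℝ) - t = (16 * (N:ℝ)^4 / c) * ((jB:ℝ) * c / (16 * N^4) - y) := by
      have hc0 : c ≠ 0 := ne_of_gt hInt
      rw [ht, mul_sub]
      congr 1
      field_simp
    rw [heq, abs_mul, abs_of_pos (by positivity : (0:ℝ) < 16 * (N:ℝ)^4 / c)]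
    calc 16 * (N:ℝ)^4 / c * |(jB:ℝ) * c / (16 * N^4) - y|
        ≤ 16 * (N:ℝ)^4 / c * (c / (48 * N^4)) := by
          apply mul_le_mul_of_nonneg_left hy (by positivity)
      _ = 1/3 := by field_simp; ring
  rw [abs_le] at hkey
  symm
  rw [Int.floor_eq_iff]
  constructor
  · push_cast
    linarith [hkey.1]
  · push_cast
    linarith [hkey.2]
end
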